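/- Let α < ω₁ be a countable ordinal and let the scalar field be ℝ. Then there exists a linear isometric embedding T : C([1, ω^α]) → C([1, ω^{α⊕α}]) such that for every pair f, g ∈ C([1, ω^α]) with ‖f‖ = ‖g‖ = 1 there exists a point r ∈ [1, ω^{α⊕α}] with min(|Tf(r)|, |Tg(r)|) ≥ 1/3; consequently, T(C([1, ω^α])) does 3-SPR in C([1, ω^{α⊕α}]). -/

import Mathlib

open scoped ZeroAtInfty

namespace Ordinal

/-- Natural (Hessenberg) addition of ordinals, as in Mathlib's former
`Mathlib/SetTheory/Ordinal/NaturalOps.lean` (since removed from Mathlib). -/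
noncomputable def nadd : Ordinal.{u} → Ordinal.{u} → Ordinal.{u}
  | a, b =>
    max (⨆ x : Set.Iio a, Order.succ (nadd x.1 b)) (⨆ x : Set.Iio b, Order.succ (nadd a x.1))
termination_by a b => (a, b)
decreasing_by all_goals cases x; decreasing_tactic

end Ordinal

infixl:65 " ♯ " => Ordinal.nadd

noncomputable section

/-- The pointwise modulus of a continuous function, as a real-valued continuous function. -/
def cmAbs {K : Type*} [TopologicalSpace K] {𝕜 : Type*} [RCLike 𝕜]
    (f : C(K, 𝕜)) : C(K, ℝ) :=
  ⟨fun x => ‖f x‖, (map_continuous f).norm⟩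

/-- `inf_{‖λ‖ = 1} ‖f - λ • g‖`. -/
def sprInf {K : Type*} [TopologicalSpace K] [CompactSpace K] {𝕜 : Type*} [RCLike 𝕜]
    (f g : C(K, 𝕜)) : ℝ :=
  ⨅ l : {c : 𝕜 // ‖c‖ = 1}, ‖f - (l : 𝕜) • g‖

/-- A subspace `E ⊆ C(K, 𝕜)` does `C`-stable phase retrieval. -/
def DoesCSPR {K : Type*} [TopologicalSpace K] [CompactSpace K] {𝕜 : Type*} [RCLike 𝕜]
    (E : Submodule 𝕜 C(K, 𝕜)) (C : ℝ) : Prop :=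
  ∀ f ∈ E, ∀ g ∈ E, sprInf f g ≤ C * ‖cmAbs f - cmAbs g‖

/-- A subspace `E ⊆ C(K, 𝕜)` does stable phase retrieval. -/
def DoesSPR {K : Type*} [TopologicalSpace K] [CompactSpace K] {𝕜 : Type*} [RCLike 𝕜]
    (E : Submodule 𝕜 C(K, 𝕜)) : Prop :=
  ∃ C : ℝ, 1 ≤ C ∧ DoesCSPR E C

/-- Ordinal intervals `[a, b]` (with the order topology of the ordinals) are compact spaces. -/
instance ordIccCompact (a b : Ordinal.{0}) : CompactSpace (Set.Icc a b) :=
  isCompact_iff_compactSpace.mp isCompact_Icc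

/-- The Cantor–Bendixson derivatives of a topological space: `cbDeriv K 0 = K`,
`cbDeriv K (o+1)` is the derived set (set of accumulation points) of `cbDeriv K o`, and at
limit ordinals one takes intersections. -/
def cbDeriv (K : Type*) [TopologicalSpace K] (o : Ordinal.{0}) : Set K :=
  Ordinal.limitRecOn o Set.univ (fun _ ih => derivedSet ih)
    (fun o _ ih => ⋂ b : Set.Iio o, ih b b.2)

/-!
Let `F : [1, ω^(α ♯ α)] → [1, ω^α] × [1, ω^α]` be a continuous surjection and
`T f = (f ∘ π₁ ∘ F + f ∘ π₂ ∘ F) / 2`. As `F` hits the diagonal, `T` is isometric. If normalized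
`f, g` never both have modulus `≥ 1/3`, then `T f` and `T g` both do at a preimage of `(x, y)`,
where `|f x| = |g y| = 1`. Applied to `(u - v) / ‖u - v‖` and `(u + v) / ‖u + v‖`, this overlap
gives `3`-SPR because `min |p - q| |p + q| ≤ ||p| - |q||`.

The surjection `[1, ω^(α ♯ β)] → [1, ω^α] × [1, ω^β]` is built by induction on `α ♯ β`. Write
`ω^α`, `ω^β` as limits of partial sums `a n`, `b n` of powers `ω^(e n)`, `ω^(f n)` with `e n < α`,
`f n < β`. Off its top corner the product is covered by the rectangles
`(a n, a (n+1)] × (b n, ω^β]` and `(a n, ω^α] × (b n, b (n+1)]`, which by induction are continuous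
images of `[1, ω^(e n ♯ β)]` and `[1, ω^(α ♯ f n)]`. These intervals are laid end to end in
`[1, ω^(α ♯ β)]` and the remaining tail is sent to the corner, which the rectangles converge to.
-/

open Ordinal Set Filter Topology

namespace Ordinal

theorem nadd_def (a b : Ordinal.{u}) : a ♯ b =
    max (⨆ x : Iio a, Order.succ (x.1 ♯ b)) (⨆ x : Iio b, Order.succ (a ♯ x.1)) := by
  rw [nadd]

theorem nadd_lt_nadd_right {a b : Ordinal.{u}} (h : a < b) (c : Ordinal.{u}) : a ♯ c < b ♯ c := by
  rw [nadd_def b c]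
  exact (Order.lt_succ _).trans_le
    (le_max_of_le_left (le_ciSup bddAbove_of_small (⟨a, h⟩ : Iio b)))

theorem nadd_lt_nadd_left {b c : Ordinal.{u}} (h : b < c) (a : Ordinal.{u}) : a ♯ b < a ♯ c := by
  rw [nadd_def a c]
  exact (Order.lt_succ _).trans_le
    (le_max_of_le_right (le_ciSup bddAbove_of_small (⟨b, h⟩ : Iio c)))

theorem zero_nadd (b : Ordinal.{u}) : 0 ♯ b = b := by
  induction b using WellFoundedLT.induction with
  | _ b ih =>
  refine le_antisymm ?_ (StrictMono.le_apply fun _ _ h => nadd_lt_nadd_left h 0)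
  rw [nadd_def]
  exact max_le (ciSup_le' fun x => (not_lt_zero (mem_Iio.1 x.2)).elim)
    (ciSup_le' fun x => by rw [ih x x.2]; exact Order.succ_le_of_lt x.2)

theorem nadd_zero (a : Ordinal.{u}) : a ♯ 0 = a := by
  induction a using WellFoundedLT.induction with
  | _ a ih =>
  refine le_antisymm ?_ (StrictMono.le_apply fun _ _ h => nadd_lt_nadd_right h 0)
  rw [nadd_def]
  exact max_le (ciSup_le' fun x => by rw [ih x x.2]; exact Order.succ_le_of_lt x.2)
    (ciSup_le' fun x => (not_lt_zero (mem_Iio.1 x.2)).elim)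

theorem one_le_omega0_opow (δ : Ordinal.{u}) : 1 ≤ ω ^ δ :=
  Order.one_le_iff_pos.2 (opow_pos δ omega0_pos)

theorem isOpen_Ioc (a b : Ordinal.{u}) : IsOpen (Ioc a b) :=
  Order.Ioo_succ_right a b ▸ isOpen_Ioo

theorem continuous_add_left (c : Ordinal.{u}) : Continuous (c + ·) :=
  (Order.isNormal_iff_strictMono_and_continuous.1 (isNormal_add_right c)).2

theorem continuousAt_sub_const {a c : Ordinal.{u}} (h : c < a) : ContinuousAt (· - c) a := by
  have hmono : StrictMonoOn (· - c) (Ici c) := fun x hx y hy hxy => by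
    simpa only [lt_sub, Ordinal.add_sub_cancel_of_le hx] using hxy
  refine hmono.continuousAt_of_exists_between (Ici_mem_nhds h) (fun b _ => ?_) (fun b _ => ?_)
  all_goals refine ⟨c + b, mem_Ici.2 le_self_add, ?_⟩
  all_goals simpa only [Ordinal.add_sub_cancel, mem_Ico, mem_Ioc, le_rfl, true_and, and_true]

def partialSum (s : ℕ → Ordinal.{u}) : ℕ → Ordinal.{u}
  | 0 => 0
  | n + 1 => partialSum s n + s n

section partialSum

variable {s : ℕ → Ordinal.{u}}

@[simp] theorem partialSum_zero : partialSum s 0 = 0 := rfl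

theorem partialSum_succ (n : ℕ) : partialSum s (n + 1) = partialSum s n + s n := rfl

theorem monotone_partialSum : Monotone (partialSum s) :=
  monotone_nat_of_le_succ fun _ => le_self_add

theorem partialSum_lt_omega0_opow {γ : Ordinal.{u}} (hs : ∀ n, s n < ω ^ γ) (n : ℕ) :
    partialSum s n < ω ^ γ := by
  induction n with
  | zero => exact opow_pos γ omega0_pos
  | succ n ih => exact isPrincipal_add_omega0_opow γ ih (hs n)

theorem partialSum_omega0_opow_lt {e : ℕ → Ordinal.{u}} {α : Ordinal.{u}} (he : ∀ n, e n < α)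
    (n : ℕ) : partialSum (ω ^ e ·) n < ω ^ α :=
  partialSum_lt_omega0_opow (fun n => (opow_lt_opow_iff_right one_lt_omega0).2 (he n)) n

theorem partialSum_add_omega0_opow_le {e : ℕ → Ordinal.{u}} {α : Ordinal.{u}} (he : ∀ n, e n < α)
    (n : ℕ) : partialSum (ω ^ e ·) n + ω ^ e n ≤ ω ^ α :=
  (partialSum_omega0_opow_lt he (n + 1)).le

theorem partialSum_add_omega0_opow_self_le {e : ℕ → Ordinal.{u}} {α : Ordinal.{u}}
    (he : ∀ n, e n < α) (n : ℕ) : partialSum (ω ^ e ·) n + ω ^ α ≤ ω ^ α :=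
  (add_omega0_opow (partialSum_omega0_opow_lt he n)).le

theorem partialSum_const (a : Ordinal.{u}) (n : ℕ) : partialSum (fun _ => a) n = a * n := by
  induction n with
  | zero => simp
  | succ n ih => rw [partialSum_succ, ih, Nat.cast_succ, mul_add_one]

end partialSum

theorem exists_surjective_nat_Iio {α : Ordinal.{0}} (hα0 : α ≠ 0) (hα : α.card ≤ Cardinal.aleph0) :
    ∃ s : ℕ → Iio α, Function.Surjective s := by
  have : Countable (Iio α) := by
    rw [← Cardinal.mk_le_aleph0_iff, Cardinal.mk_Iio_ordinal, ← Cardinal.lift_aleph0.{1, 0},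
      Cardinal.lift_le]
    exact hα
  have : Nonempty (Iio α) := ⟨⟨0, pos_iff_ne_zero.2 hα0⟩⟩
  exact exists_surjective_nat _

theorem exists_partialSum_cofinal {α : Ordinal.{0}} (hα0 : α ≠ 0) (hα : α.card ≤ Cardinal.aleph0) :
    ∃ e : ℕ → Ordinal.{0}, (∀ n, e n < α) ∧
      ∀ x < ω ^ α, ∃ n, x ≤ partialSum (ω ^ e ·) n := by
  rcases zero_or_succ_or_isSuccLimit α with rfl | ⟨α, rfl⟩ | hlim
  · exact absurd rfl hα0
  · refine ⟨fun _ => α, fun _ => Order.lt_succ α, fun x hx => ?_⟩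
    rw [opow_succ] at hx
    obtain ⟨_, hn, hxn⟩ := (lt_mul_iff_of_isSuccLimit isSuccLimit_omega0).1 hx
    obtain ⟨n, rfl⟩ := lt_omega0.1 hn
    exact ⟨n, (partialSum_const _ n).symm ▸ hxn.le⟩
  · obtain ⟨s, hs⟩ := exists_surjective_nat_Iio hα0 hα
    refine ⟨fun n => Order.succ (s n).1, fun n => hlim.succ_lt (s n).2, fun x hx => ?_⟩
    rcases eq_or_ne x 0 with rfl | hx0
    · exact ⟨0, le_rfl⟩
    have hlog : log ω x < α :=
      (opow_lt_opow_iff_right one_lt_omega0).1 ((opow_log_le_self ω hx0).trans_lt hx)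
    obtain ⟨n, hn⟩ := hs ⟨_, hlog⟩
    refine ⟨n + 1, (lt_opow_succ_log_self one_lt_omega0 x).le.trans ?_⟩
    simp only [partialSum_succ, hn]
    exact le_add_self

end Ordinal

abbrev powIcc (δ : Ordinal.{0}) : Set Ordinal.{0} := Icc 1 (ω ^ δ)

def powIccTop (δ : Ordinal.{0}) : powIcc δ := ⟨ω ^ δ, one_le_omega0_opow δ, le_rfl⟩

instance (δ : Ordinal.{0}) : Nonempty (powIcc δ) := ⟨powIccTop δ⟩

instance : Unique (powIcc 0) where
  default := powIccTop 0
  uniq x := Subtype.ext <| le_antisymm x.2.2 (by simpa [powIccTop] using x.2.1)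

theorem exists_lt_forall_mem_of_mem_nhds_powIccTop {α : Ordinal.{0}} {W : Set (powIcc α)}
    (hW : W ∈ 𝓝 (powIccTop α)) : ∃ u < ω ^ α, ∀ x : powIcc α, u < x.1 → x ∈ W := by
  rw [nhds_subtype, mem_comap] at hW
  obtain ⟨S, hS, hSW⟩ := hW
  obtain ⟨u, hu, huS⟩ := (SuccOrder.hasBasis_nhds_Ioc_of_exists_lt
    ⟨0, opow_pos α omega0_pos⟩).mem_iff.1 hS
  exact ⟨u, hu, fun x hx => hSW (huS ⟨hx, x.2.2⟩)⟩

theorem forall_lt_of_forall_notMem_Ioc {α : Type*} [LinearOrder α] {c : ℕ → α} {x : α}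
    (h0 : c 0 < x) (hx : ∀ m, x ∉ Ioc (c m) (c (m + 1))) (m : ℕ) : c m < x := by
  induction m with
  | zero => exact h0
  | succ m ih => exact not_le.1 fun h => hx m ⟨ih, h⟩

abbrev powBlock (δ : ℕ → Ordinal.{0}) (m : ℕ) : Set Ordinal.{0} :=
  Ioc (partialSum (ω ^ δ ·) m) (partialSum (ω ^ δ ·) (m + 1))

section Glue

variable {γ : Ordinal.{0}} {Y : Type*} (y₀ : Y) {δ : ℕ → Ordinal.{0}}
  (g : ∀ m, powIcc (δ m) → Y)

def blockMap (m : ℕ) (x : Ordinal.{0}) : Y :=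
  g m (projIcc 1 _ (one_le_omega0_opow _) (x - partialSum (ω ^ δ ·) m))

open Classical in
def glueBlocks (x : powIcc γ) : Y :=
  if h : ∃ m, x.1 ∈ powBlock δ m then blockMap g h.choose x.1 else y₀

variable {y₀ g}

theorem glueBlocks_of_mem_powBlock {x : powIcc γ} {m : ℕ} (hx : x.1 ∈ powBlock δ m) :
    glueBlocks y₀ g x = blockMap g m x.1 := by
  have h : ∃ m, x.1 ∈ powBlock δ m := ⟨m, hx⟩
  rw [glueBlocks, dif_pos h, monotone_partialSum.pairwise_disjoint_on_Ioc_succ.eq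
    (not_disjoint_iff.2 ⟨x.1, h.choose_spec, hx⟩)]

theorem glueBlocks_of_forall_notMem {x : powIcc γ} (hx : ∀ m, x.1 ∉ powBlock δ m) :
    glueBlocks y₀ g x = y₀ :=
  dif_neg (not_exists.2 hx)

theorem continuousAt_glueBlocks_of_mem_powBlock [TopologicalSpace Y] {x : powIcc γ} {m : ℕ}
    (hg : Continuous (g m)) (hx : x.1 ∈ powBlock δ m) : ContinuousAt (glueBlocks y₀ g) x := by
  have hblock := (isOpen_Ioc _ _).preimage continuous_subtype_val |>.mem_nhds hx
  refine ContinuousAt.congr ?_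
    (eventually_of_mem hblock fun y hy => (glueBlocks_of_mem_powBlock hy).symm)
  exact (hg.comp continuous_projIcc).continuousAt.comp
    ((continuousAt_sub_const hx.1).comp continuous_subtype_val.continuousAt)

theorem continuousAt_glueBlocks_of_forall_notMem [TopologicalSpace Y]
    (hlim : Tendsto (fun m => range (g m)) atTop (𝓝 y₀).smallSets) {x : powIcc γ}
    (hx : ∀ m, x.1 ∉ powBlock δ m) : ContinuousAt (glueBlocks y₀ g) x := by
  have hlt := forall_lt_of_forall_notMem_Ioc (x.2.1.trans_lt' zero_lt_one) hx
  show Tendsto _ (𝓝 x) (𝓝 (glueBlocks y₀ g x))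
  rw [glueBlocks_of_forall_notMem hx]
  intro W hW
  obtain ⟨N, hN⟩ := eventually_atTop.1 (tendsto_smallSets_iff.1 hlim W hW)
  rw [mem_map]
  filter_upwards [(isOpen_Ioi.preimage continuous_subtype_val).mem_nhds (hlt N)] with y hy
  by_cases hy' : ∃ m, y.1 ∈ powBlock δ m
  · obtain ⟨m, hm⟩ := hy'
    have hNm : N ≤ m := by_contra fun h =>
      (hy.trans_le hm.2).not_ge (monotone_partialSum (by omega))
    rw [mem_preimage, glueBlocks_of_mem_powBlock hm]
    exact hN m hNm (mem_range_self _)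
  · rw [mem_preimage, glueBlocks_of_forall_notMem (not_exists.1 hy')]
    exact mem_of_mem_nhds hW

theorem continuous_glueBlocks [TopologicalSpace Y] (hg : ∀ m, Continuous (g m))
    (hlim : Tendsto (fun m => range (g m)) atTop (𝓝 y₀).smallSets) :
    Continuous (glueBlocks (γ := γ) y₀ g) := by
  refine continuous_iff_continuousAt.2 fun x => ?_
  by_cases hx : ∃ m, x.1 ∈ powBlock δ m
  · obtain ⟨m, hm⟩ := hx
    exact continuousAt_glueBlocks_of_mem_powBlock (hg m) hm
  · exact continuousAt_glueBlocks_of_forall_notMem hlim (not_exists.1 hx)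

theorem glueBlocks_powIccTop (hδ : ∀ m, δ m < γ) : glueBlocks y₀ g (powIccTop γ) = y₀ :=
  glueBlocks_of_forall_notMem fun m hm => (partialSum_omega0_opow_lt hδ (m + 1)).not_ge hm.2

theorem range_subset_range_glueBlocks (hδ : ∀ m, δ m < γ) (m : ℕ) :
    range (g m) ⊆ range (glueBlocks (γ := γ) y₀ g) := by
  rintro _ ⟨u, rfl⟩
  have hblock : partialSum (ω ^ δ ·) m + u.1 ∈ powBlock δ m :=
    ⟨lt_add_of_pos_right _ (zero_lt_one.trans_le u.2.1), add_le_add_right u.2.2 _⟩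
  refine ⟨⟨_, u.2.1.trans le_add_self,
    (hblock.2.trans_lt (partialSum_omega0_opow_lt hδ _)).le⟩, ?_⟩
  rw [glueBlocks_of_mem_powBlock hblock]
  simp only [blockMap, Ordinal.add_sub_cancel, projIcc_val]

end Glue

section Shift

variable {δ α : Ordinal.{0}} {c : Ordinal.{0}} (h : c + ω ^ δ ≤ ω ^ α)

def powIccShift (u : powIcc δ) : powIcc α :=
  ⟨c + u.1, u.2.1.trans le_add_self, (add_le_add_right u.2.2 c).trans h⟩

theorem continuous_powIccShift : Continuous (powIccShift h) :=
  ((continuous_add_left c).comp continuous_subtype_val).subtype_mk _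

theorem lt_powIccShift (u : powIcc δ) : c < (powIccShift h u).1 :=
  lt_add_of_pos_right _ (zero_lt_one.trans_le u.2.1)

theorem mem_range_powIccShift {x : powIcc α} (h₁ : c < x.1) (h₂ : x.1 ≤ c + ω ^ δ) :
    x ∈ range (powIccShift h) :=
  ⟨⟨x.1 - c, Order.one_le_iff_pos.2 (lt_sub.2 (by simpa using h₁)), sub_le.2 h₂⟩,
    Subtype.ext (Ordinal.add_sub_cancel_of_le h₁.le)⟩

end Shift

theorem tendsto_corner_smallSets_nhds_powIccTop {α β : Ordinal.{0}} {a b : ℕ → Ordinal.{0}}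
    (ha : Monotone a) (hb : Monotone b) (ha_cof : ∀ x < ω ^ α, ∃ n, x ≤ a n)
    (hb_cof : ∀ y < ω ^ β, ∃ n, y ≤ b n) :
    Tendsto (fun n => {p : powIcc α × powIcc β | a n < p.1.1 ∧ b n < p.2.1}) atTop
      (𝓝 (powIccTop α, powIccTop β)).smallSets := by
  refine tendsto_smallSets_iff.2 fun W hW => ?_
  obtain ⟨U, hU, V, hV, hUV⟩ := mem_nhds_prod_iff.1 hW
  obtain ⟨u, hu, huU⟩ := exists_lt_forall_mem_of_mem_nhds_powIccTop hU
  obtain ⟨v, hv, hvV⟩ := exists_lt_forall_mem_of_mem_nhds_powIccTop hV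
  obtain ⟨n, hn⟩ := ha_cof u hu
  obtain ⟨m, hm⟩ := hb_cof v hv
  filter_upwards [eventually_ge_atTop (max n m)] with k hk p hp
  exact hUV ⟨huU _ ((hn.trans (ha (le_of_max_le_left hk))).trans_lt hp.1),
    hvV _ ((hm.trans (hb (le_of_max_le_right hk))).trans_lt hp.2)⟩

theorem exists_lt_lt_and_le_or_le_succ {α : Type*} [LinearOrder α] {a b : ℕ → α} {x y : α}
    (h₀ : a 0 < x ∧ b 0 < y) (h : ∃ n, x ≤ a n ∨ y ≤ b n) :
    ∃ n, a n < x ∧ b n < y ∧ (x ≤ a (n + 1) ∨ y ≤ b (n + 1)) := by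
  by_contra! hcon
  have hlt (n : ℕ) : a n < x ∧ b n < y := by
    induction n with
    | zero => exact h₀
    | succ n ih => exact hcon n ih.1 ih.2
  obtain ⟨n, hn⟩ := h
  exact hn.elim (hlt n).1.not_ge (hlt n).2.not_ge

theorem tendsto_sumElim_natSumNatEquivNat_symm :
    Tendsto (fun m => Sum.elim id id (Equiv.natSumNatEquivNat.symm m)) atTop atTop := by
  have hle : ∀ i : ℕ ⊕ ℕ, Equiv.natSumNatEquivNat i ≤ 2 * Sum.elim id id i + 1 := by
    rintro (n | n) <;> simp only [Equiv.natSumNatEquivNat_apply, Sum.elim_inl, Sum.elim_inr, id]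
    <;> omega
  refine tendsto_atTop_atTop.2 fun N => ⟨2 * N + 1, fun m hm => ?_⟩
  have := hle (Equiv.natSumNatEquivNat.symm m)
  rw [Equiv.apply_symm_apply] at this
  omega

section Rectangles

variable {α β : Ordinal.{0}} {e f : ℕ → Ordinal.{0}} (he : ∀ n, e n < α) (hf : ∀ n, f n < β)
  (G₁ : ∀ n, powIcc (e n ♯ β) → powIcc (e n) × powIcc β)
  (G₂ : ∀ n, powIcc (α ♯ f n) → powIcc α × powIcc (f n))

/-- With `a = partialSum (ω ^ e ·)` and `b = partialSum (ω ^ f ·)`, piece `.inl n` maps onto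
`(a n, a (n + 1)] × (b n, ω ^ β]` and piece `.inr n` onto `(a n, ω ^ α] × (b n, b (n + 1)]`. -/
def rectanglePiece :
    ∀ i : ℕ ⊕ ℕ, powIcc (Sum.elim (e · ♯ β) (α ♯ f ·) i) → powIcc α × powIcc β
  | .inl n => Prod.map (powIccShift (partialSum_add_omega0_opow_le he n))
      (powIccShift (partialSum_add_omega0_opow_self_le hf n)) ∘ G₁ n
  | .inr n => Prod.map (powIccShift (partialSum_add_omega0_opow_self_le he n))
      (powIccShift (partialSum_add_omega0_opow_le hf n)) ∘ G₂ n

theorem continuous_rectanglePiece (hG₁ : ∀ n, Continuous (G₁ n))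
    (hG₂ : ∀ n, Continuous (G₂ n)) : ∀ i, Continuous (rectanglePiece he hf G₁ G₂ i)
  | .inl n => ((continuous_powIccShift _).prodMap (continuous_powIccShift _)).comp (hG₁ n)
  | .inr n => ((continuous_powIccShift _).prodMap (continuous_powIccShift _)).comp (hG₂ n)

theorem range_rectanglePiece_subset : ∀ i, range (rectanglePiece he hf G₁ G₂ i) ⊆
    {p | partialSum (ω ^ e ·) (Sum.elim id id i) < p.1.1 ∧
      partialSum (ω ^ f ·) (Sum.elim id id i) < p.2.1}
  | .inl n => range_subset_iff.2 fun _ =>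
      ⟨lt_powIccShift (partialSum_add_omega0_opow_le he n) _,
        lt_powIccShift (partialSum_add_omega0_opow_self_le hf n) _⟩
  | .inr n => range_subset_iff.2 fun _ =>
      ⟨lt_powIccShift (partialSum_add_omega0_opow_self_le he n) _,
        lt_powIccShift (partialSum_add_omega0_opow_le hf n) _⟩

theorem exists_mem_range_rectanglePiece (hG₁ : ∀ n, Function.Surjective (G₁ n))
    (hG₂ : ∀ n, Function.Surjective (G₂ n))
    (he_cof : ∀ x < ω ^ α, ∃ n, x ≤ partialSum (ω ^ e ·) n)
    (hf_cof : ∀ y < ω ^ β, ∃ n, y ≤ partialSum (ω ^ f ·) n)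
    {p : powIcc α × powIcc β} (hp : p ≠ (powIccTop α, powIccTop β)) :
    ∃ i, p ∈ range (rectanglePiece he hf G₁ G₂ i) := by
  obtain ⟨x, y⟩ := p
  have hxy : ∃ n, x.1 ≤ partialSum (ω ^ e ·) n ∨ y.1 ≤ partialSum (ω ^ f ·) n := by
    by_cases hx : x.1 < ω ^ α
    · exact (he_cof _ hx).imp fun _ => Or.inl
    · have hy : y.1 < ω ^ β := y.2.2.lt_of_ne fun hy => hp (Prod.ext (Subtype.ext
        (x.2.2.antisymm (not_lt.1 hx))) (Subtype.ext hy))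
      exact (hf_cof _ hy).imp fun _ => Or.inr
  obtain ⟨n, hxn, hyn, hx | hy⟩ := exists_lt_lt_and_le_or_le_succ
    ⟨x.2.1.trans_lt' zero_lt_one, y.2.1.trans_lt' zero_lt_one⟩ hxy
  · obtain ⟨u, rfl⟩ := mem_range_powIccShift (partialSum_add_omega0_opow_le he n) hxn hx
    obtain ⟨v, rfl⟩ := mem_range_powIccShift (partialSum_add_omega0_opow_self_le hf n)
      hyn (y.2.2.trans le_add_self)
    obtain ⟨w, hw⟩ := hG₁ n (u, v)
    exact ⟨.inl n, w, congrArg (Prod.map _ _) hw⟩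
  · obtain ⟨u, rfl⟩ := mem_range_powIccShift (partialSum_add_omega0_opow_self_le he n)
      hxn (x.2.2.trans le_add_self)
    obtain ⟨v, rfl⟩ := mem_range_powIccShift (partialSum_add_omega0_opow_le hf n) hyn hy
    obtain ⟨w, hw⟩ := hG₂ n (u, v)
    exact ⟨.inr n, w, congrArg (Prod.map _ _) hw⟩

end Rectangles

theorem exists_continuous_surjective_of_cofinal {α β : Ordinal.{0}} {e f : ℕ → Ordinal.{0}}
    (he : ∀ n, e n < α) (hf : ∀ n, f n < β)
    (he_cof : ∀ x < ω ^ α, ∃ n, x ≤ partialSum (ω ^ e ·) n)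
    (hf_cof : ∀ y < ω ^ β, ∃ n, y ≤ partialSum (ω ^ f ·) n)
    (h₁ : ∀ n, ∃ G : powIcc (e n ♯ β) → powIcc (e n) × powIcc β,
      Continuous G ∧ Function.Surjective G)
    (h₂ : ∀ n, ∃ G : powIcc (α ♯ f n) → powIcc α × powIcc (f n),
      Continuous G ∧ Function.Surjective G) :
    ∃ F : powIcc (α ♯ β) → powIcc α × powIcc β, Continuous F ∧ Function.Surjective F := by
  choose G₁ hG₁c hG₁s using h₁
  choose G₂ hG₂c hG₂s using h₂
  let σ := Equiv.natSumNatEquivNat.symm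
  let piece m := rectanglePiece he hf G₁ G₂ (σ m)
  have hδ m : Sum.elim (e · ♯ β) (α ♯ f ·) (σ m) < α ♯ β := by
    rcases σ m with n | n
    exacts [nadd_lt_nadd_right (he n) β, nadd_lt_nadd_left (hf n) α]
  have hlim : Tendsto (fun m => range (piece m)) atTop
      (𝓝 (powIccTop α, powIccTop β)).smallSets :=
    ((tendsto_corner_smallSets_nhds_powIccTop monotone_partialSum monotone_partialSum he_cof
      hf_cof).comp tendsto_sumElim_natSumNatEquivNat_symm).smallSets_mono
      (Eventually.of_forall fun m => range_rectanglePiece_subset he hf G₁ G₂ (σ m))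
  refine ⟨glueBlocks (powIccTop α, powIccTop β) piece,
    continuous_glueBlocks (fun m => continuous_rectanglePiece he hf G₁ G₂ hG₁c hG₂c _) hlim,
    fun p => ?_⟩
  by_cases hp : p = (powIccTop α, powIccTop β)
  · exact ⟨powIccTop _, (glueBlocks_powIccTop hδ).trans hp.symm⟩
  · obtain ⟨i, hi⟩ := exists_mem_range_rectanglePiece he hf G₁ G₂ hG₁s hG₂s he_cof hf_cof hp
    obtain ⟨m, rfl⟩ := σ.surjective i
    exact range_subset_range_glueBlocks hδ m hi

theorem exists_continuous_surjective_powIcc_nadd (α β : Ordinal.{0})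
    (hα : α.card ≤ Cardinal.aleph0) (hβ : β.card ≤ Cardinal.aleph0) :
    ∃ F : powIcc (α ♯ β) → powIcc α × powIcc β, Continuous F ∧ Function.Surjective F := by
  rcases eq_or_ne α 0 with rfl | hα0
  · rw [zero_nadd]
    exact ⟨_, (Homeomorph.uniqueProd _ _).symm.continuous,
      (Homeomorph.uniqueProd _ _).symm.surjective⟩
  rcases eq_or_ne β 0 with rfl | hβ0
  · rw [nadd_zero]
    exact ⟨_, (Homeomorph.prodUnique _ _).symm.continuous,
      (Homeomorph.prodUnique _ _).symm.surjective⟩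
  obtain ⟨e, he, he_cof⟩ := exists_partialSum_cofinal hα0 hα
  obtain ⟨f, hf, hf_cof⟩ := exists_partialSum_cofinal hβ0 hβ
  exact exists_continuous_surjective_of_cofinal he hf he_cof hf_cof
    (fun n => exists_continuous_surjective_powIcc_nadd (e n) β
      ((card_le_card (he n).le).trans hα) hβ)
    (fun n => exists_continuous_surjective_powIcc_nadd α (f n) hα
      ((card_le_card (hf n).le).trans hβ))
termination_by α ♯ β
decreasing_by
  · exact nadd_lt_nadd_right (he n) β
  · exact nadd_lt_nadd_left (hf n) α

theorem min_abs_sub_abs_add_le (p q : ℝ) : min |p - q| |p + q| ≤ |(|p| - |q|)| := by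
  rcases le_total 0 p with hp | hp <;> rcases le_total 0 q with hq | hq
  · simp only [abs_of_nonneg hp, abs_of_nonneg hq, min_le_left]
  · simp only [abs_of_nonneg hp, abs_of_nonpos hq, sub_neg_eq_add, min_le_right]
  · rw [abs_of_nonpos hp, abs_of_nonneg hq, ← neg_add', abs_neg]
    exact min_le_right _ _
  · rw [abs_of_nonpos hp, abs_of_nonpos hq, neg_sub_neg, abs_sub_comm]
    exact min_le_left _ _

namespace ContinuousMap

variable {X Y : Type*} [TopologicalSpace X] [TopologicalSpace Y]

theorem exists_norm_apply_eq_norm [CompactSpace X] [Nonempty X] (f : C(X, ℝ)) :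
    ∃ x, |f x| = ‖f‖ := by
  obtain ⟨x, -, hx⟩ := isCompact_univ.exists_isMaxOn univ_nonempty f.continuous.abs.continuousOn
  exact ⟨x, le_antisymm (f.norm_coe_le_norm x)
    ((f.norm_le (abs_nonneg _)).2 fun y => hx (mem_univ y))⟩

def averageComp (F : C(Y, X × X)) : C(X, ℝ) →ₗ[ℝ] C(Y, ℝ) where
  toFun f := (2⁻¹ : ℝ) • (f.comp (fst.comp F) + f.comp (snd.comp F))
  map_add' f g := by ext; simp only [add_apply, smul_apply, comp_apply]; ring
  map_smul' c f := by ext; simp only [smul_apply, add_apply, comp_apply, RingHom.id_apply]; ring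

theorem averageComp_apply (F : C(Y, X × X)) (f : C(X, ℝ)) (y : Y) :
    averageComp F f y = (f (F y).1 + f (F y).2) / 2 :=
  inv_mul_eq_div (2 : ℝ) _

variable [CompactSpace X] {F : C(Y, X × X)}

theorem norm_averageComp [CompactSpace Y] (hF : Function.Surjective F) (f : C(X, ℝ)) :
    ‖averageComp F f‖ = ‖f‖ := by
  refine le_antisymm ((norm_le _ (norm_nonneg f)).2 fun y => ?_)
    ((norm_le _ (norm_nonneg _)).2 fun x => ?_)
  · rw [averageComp_apply, norm_div, Real.norm_two]
    linarith [norm_add_le (f (F y).1) (f (F y).2), f.norm_coe_le_norm (F y).1,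
      f.norm_coe_le_norm (F y).2]
  · obtain ⟨y, hy⟩ := hF (x, x)
    simpa [averageComp_apply, hy] using (averageComp F f).norm_coe_le_norm y

def averageCompₗᵢ [CompactSpace Y] (hF : Function.Surjective F) : C(X, ℝ) →ₗᵢ[ℝ] C(Y, ℝ) where
  toLinearMap := averageComp F
  norm_map' := norm_averageComp hF

theorem exists_le_min_abs_averageComp [Nonempty X] (hF : Function.Surjective F) {f g : C(X, ℝ)}
    (hf : ‖f‖ = 1) (hg : ‖g‖ = 1) :
    ∃ y, 1 / 3 ≤ min |averageComp F f y| |averageComp F g y| := by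
  by_cases hdiag : ∃ x, 1 / 3 ≤ min |f x| |g x|
  · obtain ⟨x, hx⟩ := hdiag
    obtain ⟨y, hy⟩ := hF (x, x)
    exact ⟨y, by simpa [averageComp_apply, hy] using hx⟩
  simp only [not_exists, not_le] at hdiag
  obtain ⟨x, hx⟩ := f.exists_norm_apply_eq_norm
  obtain ⟨x', hx'⟩ := g.exists_norm_apply_eq_norm
  have hgx : |g x| < 1 / 3 := (min_lt_iff.1 (hdiag x)).resolve_left (by rw [hx, hf]; norm_num)
  have hfx' : |f x'| < 1 / 3 :=
    (min_lt_iff.1 (hdiag x')).resolve_right (by rw [hx', hg]; norm_num)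
  obtain ⟨y, hy⟩ := hF (x, x')
  refine ⟨y, le_min ?_ ?_⟩ <;>
    rw [averageComp_apply, hy, abs_div, abs_two, le_div_iff₀ two_pos] <;> dsimp only
  · linarith [abs_sub_abs_le_abs_add (f x) (f x')]
  · rw [add_comm]
    linarith [abs_sub_abs_le_abs_add (g x') (g x)]

end ContinuousMap

section PhaseRetrieval

variable {K : Type*} [TopologicalSpace K] [CompactSpace K]

theorem sprInf_le_min (u v : C(K, ℝ)) : sprInf u v ≤ min ‖u - v‖ ‖u + v‖ := by
  have hbdd : BddBelow (range fun l : {c : ℝ // ‖c‖ = 1} => ‖u - (l : ℝ) • v‖) :=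
    ⟨0, by rintro _ ⟨l, rfl⟩; exact norm_nonneg _⟩
  refine le_min ?_ ?_
  · simpa [sprInf] using ciInf_le hbdd ⟨1, norm_one⟩
  · simpa [sprInf] using ciInf_le hbdd ⟨-1, by simp⟩

theorem abs_abs_sub_abs_le_norm_cmAbs_sub (u v : C(K, ℝ)) (r : K) :
    |(|u r| - |v r|)| ≤ ‖cmAbs u - cmAbs v‖ :=
  (cmAbs u - cmAbs v).norm_coe_le_norm r

theorem norm_le_mul_abs_of_one_div_le {C : ℝ} (hC : 0 < C) {w : C(K, ℝ)} {r : K}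
    (h : 1 / C ≤ |(‖w‖⁻¹ • w) r|) : ‖w‖ ≤ C * |w r| := by
  rcases (norm_nonneg w).eq_or_lt' with hw | hw
  · rw [hw]; positivity
  have h' : 1 / C ≤ ‖w‖⁻¹ * |w r| := by simpa [abs_mul] using h
  rwa [le_inv_mul_iff₀ hw, mul_one_div, div_le_iff₀' hC] at h'

theorem doesCSPR_of_forall_exists_le_min {E : Submodule ℝ C(K, ℝ)} {C : ℝ} (hC : 0 < C)
    (h : ∀ u ∈ E, ∀ v ∈ E, ‖u‖ = 1 → ‖v‖ = 1 → ∃ r, 1 / C ≤ min |u r| |v r|) :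
    DoesCSPR E C := by
  intro u hu v hv
  have hRHS : 0 ≤ C * ‖cmAbs u - cmAbs v‖ := by positivity
  rcases eq_or_ne (u - v) 0 with hsub | hsub
  · exact (sprInf_le_min u v).trans (min_le_left _ _) |>.trans (by rwa [hsub, norm_zero])
  rcases eq_or_ne (u + v) 0 with hadd | hadd
  · exact (sprInf_le_min u v).trans (min_le_right _ _) |>.trans (by rwa [hadd, norm_zero])
  have hnorm {w : C(K, ℝ)} (hw : w ≠ 0) : ‖‖w‖⁻¹ • w‖ = 1 := by
    rw [norm_smul, norm_inv, norm_norm, inv_mul_cancel₀ (norm_ne_zero_iff.2 hw)]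
  obtain ⟨r, hr⟩ := h _ (E.smul_mem _ (E.sub_mem hu hv)) _ (E.smul_mem _ (E.add_mem hu hv))
    (hnorm hsub) (hnorm hadd)
  have h₁ := norm_le_mul_abs_of_one_div_le hC (le_min_iff.1 hr).1
  have h₂ := norm_le_mul_abs_of_one_div_le hC (le_min_iff.1 hr).2
  calc sprInf u v ≤ min ‖u - v‖ ‖u + v‖ := sprInf_le_min u v
    _ ≤ min (C * |u r - v r|) (C * |u r + v r|) := min_le_min h₁ h₂
    _ = C * min |u r - v r| |u r + v r| := (mul_min_of_nonneg _ _ hC.le).symm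
    _ ≤ C * |(|u r| - |v r|)| := by gcongr; exact min_abs_sub_abs_add_le _ _
    _ ≤ C * ‖cmAbs u - cmAbs v‖ := by gcongr; exact abs_abs_sub_abs_le_norm_cmAbs_sub u v r

end PhaseRetrieval

/-- For every countable ordinal `α < ω₁` (real scalars) there is a linear
isometric embedding `T : C([1, ω^α]) → C([1, ω^(α ⊕ α)])` such that any two normalized
functions in the range overlap at some point with both moduli at least `1/3`; consequently the
range does `3`-SPR. -/
theorem real_overlap_embedding_into_double {α : Ordinal.{0}}
    (hα : α.card ≤ Cardinal.aleph0) :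
    ∃ T : C(Set.Icc (1 : Ordinal.{0}) (Ordinal.omega0 ^ α), ℝ) →ₗᵢ[ℝ]
        C(Set.Icc (1 : Ordinal.{0}) (Ordinal.omega0 ^ (α ♯ α)), ℝ),
      (∀ f g : C(Set.Icc (1 : Ordinal.{0}) (Ordinal.omega0 ^ α), ℝ),
        ‖f‖ = 1 → ‖g‖ = 1 →
        ∃ r : Set.Icc (1 : Ordinal.{0}) (Ordinal.omega0 ^ (α ♯ α)),
          1 / 3 ≤ min |T f r| |T g r|) ∧
      DoesCSPR (LinearMap.range T.toLinearMap) 3 := by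
  obtain ⟨F, hFc, hFs⟩ := exists_continuous_surjective_powIcc_nadd α α hα hα
  let T := ContinuousMap.averageCompₗᵢ (F := ⟨F, hFc⟩) hFs
  have hoverlap (f g : C(powIcc α, ℝ)) (hf : ‖f‖ = 1) (hg : ‖g‖ = 1) :
      ∃ r, 1 / 3 ≤ min |T f r| |T g r| :=
    ContinuousMap.exists_le_min_abs_averageComp hFs hf hg
  refine ⟨T, hoverlap, doesCSPR_of_forall_exists_le_min three_pos ?_⟩
  rintro _ ⟨f, rfl⟩ _ ⟨g, rfl⟩ hf hg
  exact hoverlap f g ((T.norm_map f).symm.trans hf) ((T.norm_map g).symm.trans hg)
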